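/- Let g ≥ 2, let a be such that the quantities below are defined (e.g. a ∈ ℂ, k := 2a), and define C(1) := (g−1)·∏_{i=1}^{g−1}(2a−i) and, for 2 ≤ m ≤ g, C(m) := (−1)^{m−1}(m−1)!·(2a)^{m−1}·∏_{i=m}^{g−1}(2a−i) (with the empty product for m = g equal to 1). For n ∈ ℕ^g with n₁+⋯+n_g = g, define c(n) := C(1) if n = (1,…,1); c(n) := 0 if at least two entries of n are greater than 1; and c(n) := C(m) if exactly one entry of n equals m > 1 and all other entries are 0 or 1. Then for every n' ∈ ℕ^g with n'₁+⋯+n'_g = g−1 one has Σ_{h=1}^g (2a − n'_h)·c(n' + e_h) = 0, where e_h is the h-th standard basis vector. -/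

import Mathlib

open scoped BigOperators Matrix

noncomputable section

def Ccoef (g : ℕ) (a : ℂ) (m : ℕ) : ℂ :=
  if m = 1 then ((g : ℂ) - 1) * ∏ i ∈ Finset.Icc 1 (g - 1), (2 * a - (i : ℂ))
  else (-1 : ℂ) ^ (m - 1) * (Nat.factorial (m - 1) : ℂ) * (2 * a) ^ (m - 1) *
    ∏ i ∈ Finset.Icc m (g - 1), (2 * a - (i : ℂ))

def ccoef (g : ℕ) (a : ℂ) (n : Fin g → ℕ) : ℂ :=
  if ∀ h, n h = 1 then Ccoef g a 1
  else if 2 ≤ (Finset.univ.filter fun h => 1 < n h).card then 0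
  else Ccoef g a (Finset.univ.sup n)

lemma ccoef_big {g : ℕ} {a : ℂ} {n : Fin g → ℕ}
    (h : 2 ≤ (Finset.univ.filter fun h => 1 < n h).card) : ccoef g a n = 0 := by
  have hne : ¬ ∀ h, n h = 1 := by
    intro hall
    simp [hall] at h
  rw [ccoef, if_neg hne, if_pos h]

lemma ccoef_one_big {g : ℕ} {a : ℂ} {n : Fin g → ℕ} {j : Fin g} {m : ℕ}
    (hm : 1 < m) (hj : n j = m) (hother : ∀ h, h ≠ j → n h ≤ 1) :
    ccoef g a n = Ccoef g a m := by
  have hfilter : (Finset.univ.filter fun h => 1 < n h) = {j} := by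
    ext h
    simp only [Finset.mem_filter, Finset.mem_univ, true_and, Finset.mem_singleton]
    constructor
    · intro hh
      by_contra hne
      exact absurd hh (not_lt.2 (hother h hne))
    · rintro rfl; omega
  have hne : ¬ ∀ h, n h = 1 := fun hall => by rw [hall j] at hj; omega
  have hsup : Finset.univ.sup n = m := by
    apply le_antisymm
    · apply Finset.sup_le
      intro h _
      rcases eq_or_ne h j with rfl | hne'
      · omega
      · exact le_trans (hother h hne') (by omega)
    · rw [← hj]; exact Finset.le_sup (Finset.mem_univ j)
  rw [ccoef, if_neg hne, if_neg (by rw [hfilter]; simp), hsup]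

lemma ccoef_all_one {g : ℕ} {a : ℂ} {n : Fin g → ℕ} (h : ∀ h, n h = 1) :
    ccoef g a n = Ccoef g a 1 := by
  rw [ccoef, if_pos h]

lemma prod_split {g m : ℕ} (a : ℂ) (h1 : 1 ≤ m) (hm : m ≤ g - 1) :
    ∏ i ∈ Finset.Icc m (g - 1), (2 * a - (i : ℂ))
      = (2 * a - (m : ℂ)) * ∏ i ∈ Finset.Icc (m + 1) (g - 1), (2 * a - (i : ℂ)) := by
  rw [← Finset.Ico_add_one_right_eq_Icc, ← Finset.Ico_add_one_right_eq_Icc,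
    Finset.prod_eq_prod_Ico_succ_bot (by omega : m < g - 1 + 1)]

lemma keyB {g : ℕ} (a : ℂ) {m : ℕ} (h2 : 2 ≤ m) (hm : m ≤ g - 1) :
    (2 * a - (m : ℂ)) * Ccoef g a (m + 1) + (m : ℂ) * (2 * a) * Ccoef g a m = 0 := by
  rw [Ccoef, if_neg (by omega), Ccoef, if_neg (by omega)]
  rw [prod_split a (by omega) hm]
  have h1 : m + 1 - 1 = m := by omega
  have h0 : m - 1 + 1 = m := by omega
  rw [h1]
  have hfact : (Nat.factorial m : ℂ) = (m : ℂ) * Nat.factorial (m - 1) := by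
    conv_lhs => rw [← h0, Nat.factorial_succ, h0]
    push_cast
    ring
  have hpow : (-1 : ℂ) ^ m = (-1) * (-1 : ℂ) ^ (m - 1) := by
    conv_lhs => rw [← h0, pow_succ]
    ring
  have hpow2 : (2 * a) ^ m = (2 * a) * (2 * a) ^ (m - 1) := by
    conv_lhs => rw [← h0, pow_succ]
    ring
  rw [hfact, hpow, hpow2]
  ring

lemma keyC {g : ℕ} (a : ℂ) (hg : 2 ≤ g) :
    (2 * a) * Ccoef g a 1 + ((g : ℂ) - 1) * (2 * a - 1) * Ccoef g a 2 = 0 := by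
  rw [Ccoef, if_pos rfl, Ccoef, if_neg (by omega)]
  rw [prod_split a le_rfl (by omega)]
  norm_num
  ring

/-- With the coefficients `C(m)` and `c(n)` of the paper (for a parameter
`a ∈ ℂ`), for every `n' ∈ ℕ^g` with `n'₁+⋯+n'_g = g−1` one has
`Σ_{h=1}^g (2a − n'_h)·c(n' + e_h) = 0`. -/
theorem statement_16 (g : ℕ) (hg : 2 ≤ g) (a : ℂ) (n' : Fin g → ℕ)
    (hn' : ∑ h, n' h = g - 1) :
    ∑ h : Fin g, (2 * a - (n' h : ℂ)) * ccoef g a (Function.update n' h (n' h + 1)) = 0 := by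
  set S := Finset.univ.filter (fun h => 1 < n' h) with hS
  by_cases hc2 : 2 ≤ S.card
  · apply Finset.sum_eq_zero
    intro h _
    have hz : ccoef g a (Function.update n' h (n' h + 1)) = 0 := by
      apply ccoef_big
      refine le_trans hc2 (Finset.card_le_card ?_)
      intro x hx
      simp only [hS, Finset.mem_filter, Finset.mem_univ, true_and] at hx ⊢
      rcases eq_or_ne x h with rfl | hne
      · rw [Function.update_self]; omega
      · rw [Function.update_of_ne hne]; exact hx
    rw [hz, mul_zero]
  · push_neg at hc2
    interval_cases hcard : S.card
    · -- no entry exceeds 1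
      have hle : ∀ h, n' h ≤ 1 := by
        intro h
        by_contra hh
        have : h ∈ S := by simp [hS]; omega
        rw [Finset.card_eq_zero] at hcard
        simp [hcard] at this
      classical
      -- count the zeros: exactly one
      have hsum2 : ∑ h, n' h = (Finset.univ.filter fun h => ¬ n' h = 0).card := by
        rw [Finset.card_filter]
        apply Finset.sum_congr rfl
        intro h _
        have := hle h
        by_cases h0 : n' h = 0 <;> simp [h0] <;> omega
      have hZ : (Finset.univ.filter fun h => n' h = 0).card = 1 := by
        have hsplit := Finset.card_filter_add_card_filter_not
          (s := (Finset.univ : Finset (Fin g))) (p := fun h => n' h = 0)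
        have hcu : (Finset.univ : Finset (Fin g)).card = g := by simp
        omega
      obtain ⟨j, hj⟩ := Finset.card_eq_one.mp hZ
      have hj0 : n' j = 0 := by
        have : j ∈ Finset.univ.filter fun h => n' h = 0 := by
          rw [hj]; exact Finset.mem_singleton_self j
        simpa using this
      have hone : ∀ h, h ≠ j → n' h = 1 := by
        intro h hne
        have : h ∉ Finset.univ.filter fun h => n' h = 0 := by
          rw [hj]; simpa using hne
        simp only [Finset.mem_filter, Finset.mem_univ, true_and] at this
        have := hle h
        omega
      rw [← Finset.add_sum_erase _ _ (Finset.mem_univ j)]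
      have hFj : (2 * a - (n' j : ℂ)) * ccoef g a (Function.update n' j (n' j + 1))
          = (2 * a) * Ccoef g a 1 := by
        rw [hj0]
        have : ccoef g a (Function.update n' j (0 + 1)) = Ccoef g a 1 := by
          apply ccoef_all_one
          intro h
          rcases eq_or_ne h j with rfl | hne
          · rw [Function.update_self]
          · rw [Function.update_of_ne hne]; exact hone h hne
        rw [this]
        norm_num
      have hFrest : ∑ h ∈ Finset.univ.erase j,
          (2 * a - (n' h : ℂ)) * ccoef g a (Function.update n' h (n' h + 1))
          = ((g : ℂ) - 1) * ((2 * a - 1) * Ccoef g a 2) := by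
        rw [Finset.sum_congr rfl (fun h hh => ?_), Finset.sum_const,
          Finset.card_erase_of_mem (Finset.mem_univ j)]
        · rw [nsmul_eq_mul]
          congr 1
          have hcu : (Finset.univ : Finset (Fin g)).card = g := by simp
          rw [hcu]
          push_cast [Nat.cast_sub (by omega : 1 ≤ g)]
          ring
        · have hne : h ≠ j := Finset.ne_of_mem_erase hh
          have h1 : n' h = 1 := hone h hne
          have : ccoef g a (Function.update n' h (n' h + 1)) = Ccoef g a 2 := by
            apply ccoef_one_big (j := h) (m := 2) (by omega)
            · rw [Function.update_self]; omega
            · intro h' hne'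
              rw [Function.update_of_ne hne']
              exact hle h'
          rw [this, h1]
          norm_num
      rw [hFj, hFrest]
      have := keyC a hg
      linear_combination this
    · -- exactly one entry exceeds 1
      classical
      obtain ⟨j, hj⟩ := Finset.card_eq_one.mp hcard
      have hjm : 1 < n' j := by
        have : j ∈ S := by rw [hj]; exact Finset.mem_singleton_self j
        simpa [hS] using this
      have hother : ∀ h, h ≠ j → n' h ≤ 1 := by
        intro h hne
        by_contra hh
        have : h ∈ S := by simp [hS]; omega
        rw [hj] at this
        simp at this
        exact hne this
      set m := n' j with hm
      have hmle : m ≤ g - 1 := by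
        rw [← hn']
        exact Finset.single_le_sum (fun i _ => Nat.zero_le _) (Finset.mem_univ j)
      -- count the zeros: exactly m of them, all ≠ j
      have e1 : n' j + ∑ h ∈ Finset.univ.erase j, n' h = g - 1 := by
        rw [Finset.add_sum_erase _ _ (Finset.mem_univ j)]; exact hn'
      have e2 : ∑ h ∈ Finset.univ.erase j, n' h
          = ((Finset.univ.erase j).filter fun h => ¬ n' h = 0).card := by
        rw [Finset.card_filter]
        apply Finset.sum_congr rfl
        intro h hh
        have := hother h (Finset.ne_of_mem_erase hh)
        by_cases h0 : n' h = 0 <;> simp [h0] <;> omega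
      have e3 := Finset.card_filter_add_card_filter_not
        (s := Finset.univ.erase j) (p := fun h => n' h = 0)
      have hce : (Finset.univ.erase j).card = g - 1 := by
        rw [Finset.card_erase_of_mem (Finset.mem_univ j)]; simp
      have hZ : ((Finset.univ.erase j).filter fun h => n' h = 0).card = m := by omega
      rw [← Finset.add_sum_erase _ _ (Finset.mem_univ j)]
      have hFj : (2 * a - (n' j : ℂ)) * ccoef g a (Function.update n' j (n' j + 1))
          = (2 * a - (m : ℂ)) * Ccoef g a (m + 1) := by
        congr 1
        have : ccoef g a (Function.update n' j (n' j + 1)) = Ccoef g a (m + 1) := by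
          apply ccoef_one_big (j := j) (m := m + 1) (by omega)
          · rw [Function.update_self]
          · intro h' hne'
            rw [Function.update_of_ne hne']
            exact hother h' hne'
        rw [this]
      have hFrest : ∑ h ∈ Finset.univ.erase j,
          (2 * a - (n' h : ℂ)) * ccoef g a (Function.update n' h (n' h + 1))
          = (m : ℂ) * ((2 * a) * Ccoef g a m) := by
        have step : ∀ h ∈ Finset.univ.erase j,
            (2 * a - (n' h : ℂ)) * ccoef g a (Function.update n' h (n' h + 1))
            = if n' h = 0 then (2 * a) * Ccoef g a m else 0 := by
          intro h hh
          have hne : h ≠ j := Finset.ne_of_mem_erase hh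
          have hle1 : n' h ≤ 1 := hother h hne
          by_cases h0 : n' h = 0
          · rw [if_pos h0, h0]
            have : ccoef g a (Function.update n' h (0 + 1)) = Ccoef g a m := by
              apply ccoef_one_big (j := j) (m := m) (by omega)
              · rw [Function.update_of_ne (Ne.symm hne)]
              · intro h' hne'
                rcases eq_or_ne h' h with rfl | hne''
                · rw [Function.update_self]
                · rw [Function.update_of_ne hne'']
                  exact hother h' hne'
            rw [this]
            norm_num
          · rw [if_neg h0]
            have h1 : n' h = 1 := by omega
            have : ccoef g a (Function.update n' h (n' h + 1)) = 0 := by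
              apply ccoef_big
              calc 2 = ({j, h} : Finset (Fin g)).card := by
                        rw [Finset.card_pair (Ne.symm hne)]
                _ ≤ _ := by
                        apply Finset.card_le_card
                        intro x hx
                        simp only [Finset.mem_insert, Finset.mem_singleton] at hx
                        simp only [Finset.mem_filter, Finset.mem_univ, true_and]
                        rcases hx with rfl | rfl
                        · rw [Function.update_of_ne (Ne.symm hne)]; exact hjm
                        · rw [Function.update_self]; omega
            rw [this, mul_zero]
        rw [Finset.sum_congr rfl step, ← Finset.sum_filter]
        rw [Finset.sum_const, hZ, nsmul_eq_mul]
      rw [hFj, hFrest]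
      have := keyB (g := g) a (by omega : 2 ≤ m) hmle
      linear_combination this

end
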